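/- Let X, Y ∈ C^{n×n} be Hermitian positive semidefinite, and let Π_X and Π_Y denote the orthogonal projectors onto the column spaces of X and Y respectively. Let σ_min be a lower bound on the nonzero singular values of X. Then ||Π_X(I − Π_Y)||_F ≤ ||X − Y||_F / σ_min. -/

import Mathlib

open Matrix Finset
open scoped ComplexOrder

noncomputable def frob {m n : ℕ} (M : Matrix (Fin m) (Fin n) ℂ) : ℝ :=
  Real.sqrt (∑ i, ∑ j, ‖M i j‖ ^ 2)

noncomputable def spec {m n : ℕ} (M : Matrix (Fin m) (Fin n) ℂ) : ℝ :=
  ‖LinearMap.toContinuousLinearMap (Matrix.toEuclideanLin M)‖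

def IsMoorePenrose {m n : ℕ} (M : Matrix (Fin m) (Fin n) ℂ) (G : Matrix (Fin n) (Fin m) ℂ) : Prop :=
  M * G * M = M ∧ G * M * G = G ∧ (M * G)ᴴ = M * G ∧ (G * M)ᴴ = G * M

noncomputable def enorm {n : ℕ} (x : Fin n → ℂ) : ℝ := Real.sqrt (∑ i, ‖x i‖ ^ 2)

/-!
Let `G` be the Moore–Penrose pseudo-inverse of `X`, i.e. `x ↦ x⁻¹` applied to `X` by functional
calculus (Lean's `0⁻¹ = 0` is exactly what inverts `X` on its range and kills its kernel).
Then `Π_X = X G = G X`, and since `Y (I - Π_Y) = 0`, `Π_X (I - Π_Y) = G (X - Y) (I - Π_Y)`. Finally `GᴴG ≤ σ⁻² I` because the nonzero eigenvalues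
of `X` are at least `σ`, so left multiplication by `G` scales the Frobenius norm by at most `σ⁻¹`,
and right multiplication by the orthogonal projection `I - Π_Y` does not increase it.
-/

open scoped MatrixOrder

section Frobenius

variable {k m n : ℕ}

lemma frob_nonneg (M : Matrix (Fin m) (Fin n) ℂ) : 0 ≤ frob M := Real.sqrt_nonneg _

lemma frob_sq_eq_re_trace (M : Matrix (Fin m) (Fin n) ℂ) : frob M ^ 2 = (Mᴴ * M).trace.re := by
  rw [frob, Real.sq_sqrt (by positivity), Finset.sum_comm, trace, Complex.re_sum]
  refine Finset.sum_congr rfl fun j _ => ?_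
  rw [diag_apply, mul_apply, Complex.re_sum]
  refine Finset.sum_congr rfl fun i _ => ?_
  rw [conjTranspose_apply, mul_comm, Complex.star_def, Complex.mul_conj, Complex.normSq_eq_norm_sq]
  norm_cast

lemma frob_conjTranspose (M : Matrix (Fin m) (Fin n) ℂ) : frob Mᴴ = frob M := by
  rw [frob, frob, Finset.sum_comm]
  simp

lemma frob_mul_le_of_conjTranspose_mul_self_le {A : Matrix (Fin k) (Fin m) ℂ} {c : ℝ}
    (hc : 0 ≤ c) (hA : Aᴴ * A ≤ c ^ 2 • 1) (M : Matrix (Fin m) (Fin n) ℂ) :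
    frob (A * M) ≤ c * frob M := by
  have hgap : 0 ≤ (Mᴴ * (c ^ 2 • 1 - Aᴴ * A) * M).trace.re :=
    Complex.nonneg_iff.mp ((Matrix.le_iff.mp hA).conjTranspose_mul_mul_same M).trace_nonneg |>.1
  have hsq : frob (A * M) ^ 2 ≤ (c * frob M) ^ 2 := by
    rw [mul_pow, frob_sq_eq_re_trace, frob_sq_eq_re_trace]
    simp only [Matrix.mul_sub, Matrix.sub_mul, Matrix.mul_smul, Matrix.smul_mul, Matrix.mul_one,
      trace_sub, trace_smul, Complex.sub_re, Complex.smul_re, smul_eq_mul] at hgap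
    rw [conjTranspose_mul, Matrix.mul_assoc, ← Matrix.mul_assoc Aᴴ, ← Matrix.mul_assoc]
    linarith
  exact (pow_le_pow_iff_left₀ (frob_nonneg _) (mul_nonneg hc (frob_nonneg _)) two_ne_zero).mp hsq

lemma frob_mul_one_sub_le {P : Matrix (Fin n) (Fin n) ℂ} (hP : P * P = P) (hPh : P.IsHermitian)
    (M : Matrix (Fin m) (Fin n) ℂ) : frob (M * (1 - P)) ≤ frob M := by
  have hQ : (1 - P)ᴴ = 1 - P := by rw [conjTranspose_sub, conjTranspose_one, hPh.eq]
  have hle : (1 - P)ᴴ * (1 - P) ≤ (1 : ℝ) ^ 2 • 1 := by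
    have hidem : (1 - P) * (1 - P) = 1 - P := by
      rw [Matrix.sub_mul, Matrix.mul_sub, Matrix.mul_sub, hP, Matrix.one_mul, Matrix.mul_one,
        Matrix.one_mul, sub_self, sub_zero]
    rw [hQ, hidem, one_pow, one_smul, Matrix.le_iff, sub_sub_cancel]
    simpa [hPh.eq, hP] using posSemidef_conjTranspose_mul_self P
  calc frob (M * (1 - P)) = frob ((1 - P) * Mᴴ) := by
        rw [← frob_conjTranspose, conjTranspose_mul, hQ]
    _ ≤ 1 * frob Mᴴ := frob_mul_le_of_conjTranspose_mul_self_le zero_le_one hle _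
    _ = frob M := by rw [one_mul, frob_conjTranspose]

end Frobenius

section Range

variable {ι κ μ R : Type*} [Fintype κ] [Fintype μ] [CommRing R]

lemma range_mulVecLin_mul_le (A : Matrix ι κ R) (B : Matrix κ μ R) :
    LinearMap.range (A * B).mulVecLin ≤ LinearMap.range A.mulVecLin := by
  rw [mulVecLin_mul]
  exact LinearMap.range_comp_le_range _ _

lemma mul_eq_of_mul_eq_of_range_le [Fintype ι] [DecidableEq μ] {C : Matrix ι ι R} {X : Matrix ι κ R}
    {D : Matrix ι μ R} (hCX : C * X = X)
    (hD : LinearMap.range D.mulVecLin ≤ LinearMap.range X.mulVecLin) : C * D = D := by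
  refine ext_of_mulVec_single fun j => ?_
  obtain ⟨w, hw⟩ := hD ⟨Pi.single j 1, rfl⟩
  rw [mulVecLin_apply, mulVecLin_apply] at hw
  rw [← mulVec_mulVec, ← hw, mulVec_mulVec, hCX]

lemma Matrix.IsHermitian.eq_of_mul_eq_of_range_le [Fintype ι] [DecidableEq ι] [StarRing R]
    {P Q : Matrix ι ι R} {X : Matrix ι κ R} (hP : P.IsHermitian) (hQ : Q.IsHermitian)
    (hPX : P * X = X) (hQX : Q * X = X)
    (hPr : LinearMap.range P.mulVecLin ≤ LinearMap.range X.mulVecLin)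
    (hQr : LinearMap.range Q.mulVecLin ≤ LinearMap.range X.mulVecLin) : P = Q :=
  calc P = (Q * P)ᴴ := by rw [mul_eq_of_mul_eq_of_range_le hQX hPr, hP.eq]
    _ = P * Q := by rw [conjTranspose_mul, hP.eq, hQ.eq]
    _ = Q := mul_eq_of_mul_eq_of_range_le hPX hQr

end Range

section PseudoInverse

variable {ι 𝕜 : Type*} [Fintype ι] [DecidableEq ι] [RCLike 𝕜] {X : Matrix ι ι 𝕜}

lemma mul_cfc_inv_mul_self (hX : X.IsHermitian) : X * cfc (·⁻¹ : ℝ → ℝ) X * X = X := by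
  have hc (f : ℝ → ℝ) := X.finite_real_spectrum.continuousOn f
  calc X * cfc (·⁻¹ : ℝ → ℝ) X * X = cfc (fun x : ℝ => x * x⁻¹ * x) X := by
        rw [cfc_mul _ _ X (hc _) (hc _), cfc_mul _ _ X (hc _) (hc _), cfc_id' ℝ X hX.isSelfAdjoint]
    _ = X := by simp only [mul_inv_mul_cancel]; exact cfc_id' ℝ X hX.isSelfAdjoint

lemma isHermitian_cfc (f : ℝ → ℝ) : (cfc f X).IsHermitian := (cfc_predicate f X).isHermitian

lemma cfc_inv_mul_self_le (hX : X.IsHermitian) {σ : ℝ} (hσ : 0 < σ)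
    (h : ∀ i, hX.eigenvalues i ≠ 0 → σ ≤ hX.eigenvalues i) :
    cfc (·⁻¹ : ℝ → ℝ) X * cfc (·⁻¹ : ℝ → ℝ) X ≤ σ⁻¹ ^ 2 • 1 := by
  have hc (f : ℝ → ℝ) := X.finite_real_spectrum.continuousOn f
  rw [← cfc_mul _ _ X (hc _) (hc _), ← Algebra.algebraMap_eq_smul_one]
  refine cfc_le_algebraMap _ _ X (fun x hx => ?_) (hc _)
  obtain ⟨i, rfl⟩ := hX.spectrum_real_eq_range_eigenvalues ▸ hx
  rcases eq_or_ne (hX.eigenvalues i) 0 with h0 | h0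
  · rw [h0, _root_.inv_zero, mul_zero]
    positivity
  · have hσi := h i h0
    rw [← sq]
    exact pow_le_pow_left₀ (inv_nonneg.mpr (hσ.le.trans hσi)) (inv_anti₀ hσ hσi) 2

end PseudoInverse

theorem stmt9_general {n : ℕ} (X Y PX PY : Matrix (Fin n) (Fin n) ℂ)
    (hX : X.PosSemidef) (hY : Y.PosSemidef)
    (hPX2 : PX.IsHermitian) (hPX3 : PX * X = X)
    (hPX4 : LinearMap.range PX.mulVecLin = LinearMap.range X.mulVecLin)
    (hPY1 : PY * PY = PY) (hPY2 : PY.IsHermitian) (hPY3 : PY * Y = Y)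
    (σ : ℝ) (hσ : 0 < σ)
    (hσX : ∀ i, hX.1.eigenvalues i ≠ 0 → σ ≤ hX.1.eigenvalues i) :
    frob (PX * (1 - PY)) ≤ frob (X - Y) / σ := by
  set G := cfc (·⁻¹ : ℝ → ℝ) X
  have hG : G.IsHermitian := isHermitian_cfc _
  have hGX : G * X = X * G := (Commute.refl X).cfc_real _
  have hXG : (X * G).IsHermitian := by
    rw [IsHermitian, conjTranspose_mul, hG.eq, hX.1.eq, hGX]
  have hPX : PX = X * G := hPX2.eq_of_mul_eq_of_range_le hXG hPX3
    (mul_cfc_inv_mul_self hX.1) hPX4.le (range_mulVecLin_mul_le X G)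
  have hYPY : Y * (1 - PY) = 0 := by
    have hYP : Y * PY = Y := by simpa [hY.1.eq, hPY2.eq] using congrArg conjTranspose hPY3
    rw [Matrix.mul_sub, Matrix.mul_one, hYP, sub_self]
  have hGG : Gᴴ * G ≤ σ⁻¹ ^ 2 • 1 := by
    rw [hG.eq]
    exact cfc_inv_mul_self_le hX.1 hσ hσX
  calc frob (PX * (1 - PY)) = frob (G * ((X - Y) * (1 - PY))) := by
        rw [hPX, ← hGX, Matrix.sub_mul, hYPY, sub_zero, Matrix.mul_assoc]
    _ ≤ σ⁻¹ * frob ((X - Y) * (1 - PY)) :=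
        frob_mul_le_of_conjTranspose_mul_self_le (by positivity) hGG _
    _ ≤ σ⁻¹ * frob (X - Y) := by gcongr; exact frob_mul_one_sub_le hPY1 hPY2 _
    _ = frob (X - Y) / σ := inv_mul_eq_div _ _

theorem stmt9 {n : ℕ} (X Y PX PY : Matrix (Fin n) (Fin n) ℂ)
    (hX : X.PosSemidef) (hY : Y.PosSemidef)
    (hPX1 : PX * PX = PX) (hPX2 : PX.IsHermitian) (hPX3 : PX * X = X)
    (hPX4 : LinearMap.range PX.mulVecLin = LinearMap.range X.mulVecLin)
    (hPY1 : PY * PY = PY) (hPY2 : PY.IsHermitian) (hPY3 : PY * Y = Y)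
    (hPY4 : LinearMap.range PY.mulVecLin = LinearMap.range Y.mulVecLin)
    (σ : ℝ) (hσ : 0 < σ)
    (hσX : ∀ i, hX.1.eigenvalues i ≠ 0 → σ ≤ hX.1.eigenvalues i) :
    frob (PX * (1 - PY)) ≤ frob (X - Y) / σ :=
  stmt9_general X Y PX PY hX hY hPX2 hPX3 hPX4 hPY1 hPY2 hPY3 σ hσ hσX
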